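/- Let G be any real n×n matrix satisfying GW = 0, GZ̃ = Z̃, and G_{ii} = 0 for every i. Then, without any homoskedasticity assumption (allowing Var(ν_i) and Cov(ε_i, ν_i) to vary arbitrarily across i), E[xᵀGx] = ‖ℓ̃‖² and E[yᵀGx] = β·‖ℓ̃‖². In particular, if ℓ̃ ≠ 0 then E[yᵀGx]/E[xᵀGx] = β exactly. -/

import Mathlib

/-!
In `uᵀGv = ∑ᵢⱼ Gᵢⱼ uᵢ vⱼ` the zero diagonal of `G` removes every term with `i = j`, and for
`i ≠ j` the coordinates `uᵢ`, `vⱼ` are independent, so `E[uᵀGv] = E[u]ᵀ G E[v]` whatever the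
variances and covariances of the individual coordinates are. Here `E[x] = Z̃π + Wδ` and
`E[y] = β E[x] + Wα`; the conditions `GZ̃ = Z̃`, `GW = 0` give `G E[x] = ℓ̃`, and `WᵀZ̃ = 0`
kills the `W`-components in the inner products with `ℓ̃`.
-/

open MeasureTheory ProbabilityTheory Matrix

section IndependentCoordinates

variable {Ω ι : Type*} [MeasurableSpace Ω] {μ : Measure Ω} [Fintype ι]

lemma integral_eq_of_forall_integral_eval_eq {u : Ω → ι → ℝ} (hu : Integrable u μ) {a : ι → ℝ}
    (h : ∀ i, ∫ ω, u ω i ∂μ = a i) : ∫ ω, u ω ∂μ = a :=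
  funext fun i => (eval_integral hu.eval i).trans (h i)

lemma integrable_const_mul_mul_of_indepFun {X Y : Ω → ℝ} {c : ℝ} (hXY : c ≠ 0 → X ⟂ᵢ[μ] Y)
    (hX : Integrable X μ) (hY : Integrable Y μ) : Integrable (fun ω => c * (X ω * Y ω)) μ := by
  by_cases hc : c = 0
  · simp [hc]
  · exact ((hXY hc).integrable_mul hX hY).const_mul c

lemma integral_const_mul_mul_of_indepFun {X Y : Ω → ℝ} {c : ℝ} (hXY : c ≠ 0 → X ⟂ᵢ[μ] Y)
    (hX : Integrable X μ) (hY : Integrable Y μ) :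
    ∫ ω, c * (X ω * Y ω) ∂μ = c * ((∫ ω, X ω ∂μ) * ∫ ω, Y ω ∂μ) := by
  by_cases hc : c = 0
  · simp [hc]
  · rw [integral_const_mul, (hXY hc).integral_fun_mul_eq_mul_integral hX.aestronglyMeasurable
      hY.aestronglyMeasurable]

lemma dotProduct_mulVec_eq_sum_sum (u v : ι → ℝ) (G : Matrix ι ι ℝ) :
    u ⬝ᵥ (G *ᵥ v) = ∑ i, ∑ j, G i j * (u i * v j) := by
  simp only [dotProduct, mulVec, Finset.mul_sum]
  exact Finset.sum_congr rfl fun i _ => Finset.sum_congr rfl fun j _ => by ring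

theorem integral_dotProduct_mulVec_of_indepFun {u v : Ω → ι → ℝ} {G : Matrix ι ι ℝ}
    (hu : Integrable u μ) (hv : Integrable v μ)
    (huv : ∀ i j, G i j ≠ 0 → (fun ω => u ω i) ⟂ᵢ[μ] fun ω => v ω j) :
    ∫ ω, u ω ⬝ᵥ (G *ᵥ v ω) ∂μ = (∫ ω, u ω ∂μ) ⬝ᵥ (G *ᵥ ∫ ω, v ω ∂μ) := by
  have hint (i j : ι) : Integrable (fun ω => G i j * (u ω i * v ω j)) μ :=
    integrable_const_mul_mul_of_indepFun (huv i j) (hu.eval i) (hv.eval j)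
  have hmean (i j : ι) : ∫ ω, G i j * (u ω i * v ω j) ∂μ =
      G i j * ((∫ ω, u ω ∂μ) i * (∫ ω, v ω ∂μ) j) := by
    rw [eval_integral hu.eval, eval_integral hv.eval]
    exact integral_const_mul_mul_of_indepFun (huv i j) (hu.eval i) (hv.eval j)
  simp_rw [dotProduct_mulVec_eq_sum_sum, ← hmean]
  rw [integral_finsetSum _ fun i _ => integrable_finsetSum _ fun j _ => hint i j]
  exact Finset.sum_congr rfl fun i _ => integral_finsetSum _ fun j _ => hint i j

theorem integral_dotProduct_mulVec_of_iIndepFun {𝓨 : Type*} [MeasurableSpace 𝓨]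
    {Y : ι → Ω → 𝓨} (hY : iIndepFun Y μ) {f g : ι → 𝓨 → ℝ} (hf : ∀ i, Measurable (f i))
    (hg : ∀ i, Measurable (g i)) {u v : Ω → ι → ℝ} (hfu : ∀ ω i, u ω i = f i (Y i ω))
    (hgv : ∀ ω i, v ω i = g i (Y i ω)) (hu : Integrable u μ) (hv : Integrable v μ)
    {G : Matrix ι ι ℝ} (hG : ∀ i, G i i = 0) :
    ∫ ω, u ω ⬝ᵥ (G *ᵥ v ω) ∂μ = (∫ ω, u ω ∂μ) ⬝ᵥ (G *ᵥ ∫ ω, v ω ∂μ) := by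
  refine integral_dotProduct_mulVec_of_indepFun hu hv fun i j hij => ?_
  simp only [hfu, hgv]
  exact (hY.indepFun fun h => hij (by subst h; exact hG i)).comp (hf i) (hg j)

end IndependentCoordinates

section LinearAlgebra

variable {m n p : Type*} [Fintype m] [Fintype n] [Fintype p]

lemma mulVec_dotProduct_mulVec_eq_zero {W : Matrix m n ℝ} {Z : Matrix m p ℝ} (h : Wᵀ * Z = 0)
    (a : n → ℝ) (b : p → ℝ) : (W *ᵥ a) ⬝ᵥ (Z *ᵥ b) = 0 := by
  rw [← vecMul_transpose, ← dotProduct_mulVec, mulVec_mulVec, h, zero_mulVec, dotProduct_zero]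

lemma mulVec_add_mulVec_eq_of_mul_eq {G : Matrix m m ℝ} {Z : Matrix m p ℝ} {W : Matrix m n ℝ}
    (hGZ : G * Z = Z) (hGW : G * W = 0) (a : p → ℝ) (b : n → ℝ) :
    G *ᵥ (Z *ᵥ a + W *ᵥ b) = Z *ᵥ a := by
  rw [mulVec_add, mulVec_mulVec, mulVec_mulVec, hGZ, hGW, zero_mulVec, add_zero]

end LinearAlgebra

theorem stmt1_general
    {Ω : Type*} [MeasurableSpace Ω] (μ : Measure Ω) [IsProbabilityMeasure μ]
    (n K L : ℕ)
    (W : Matrix (Fin n) (Fin L) ℝ) (Z : Matrix (Fin n) (Fin K) ℝ)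
    (hWZ : Wᵀ * Z = 0)
    (ε ν : Ω → Fin n → ℝ)
    (hindep : ProbabilityTheory.iIndepFun
      (fun i ω => (ε ω i, ν ω i)) μ)
    (hεL2 : ∀ i, MemLp (fun ω => ε ω i) 2 μ)
    (hνL2 : ∀ i, MemLp (fun ω => ν ω i) 2 μ)
    (α : Fin L → ℝ) (π : Fin K → ℝ) (δ : Fin L → ℝ) (β : ℝ)
    (hνmean : ∀ i, ∫ ω, ν ω i ∂μ = 0)
    (hεmean : ∀ i, ∫ ω, ε ω i ∂μ = W i ⬝ᵥ α)
    (x y : Ω → Fin n → ℝ) (ℓ : Fin n → ℝ)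
    (hx : ∀ ω, x ω = Z *ᵥ π + W *ᵥ δ + ν ω)
    (hℓ : ℓ = Z *ᵥ π)
    (hy : ∀ ω, y ω = β • x ω + ε ω)
    (G : Matrix (Fin n) (Fin n) ℝ)
    (hGW : G * W = 0) (hGZ : G * Z = Z) (hGdiag : ∀ i, G i i = 0) :
    (∫ ω, x ω ⬝ᵥ (G *ᵥ x ω) ∂μ = ℓ ⬝ᵥ ℓ) ∧
    (∫ ω, y ω ⬝ᵥ (G *ᵥ x ω) ∂μ = β * (ℓ ⬝ᵥ ℓ)) ∧
    (ℓ ≠ 0 →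
      (∫ ω, y ω ⬝ᵥ (G *ᵥ x ω) ∂μ) / (∫ ω, x ω ⬝ᵥ (G *ᵥ x ω) ∂μ) = β) := by
  set c := Z *ᵥ π + W *ᵥ δ
  have hεint : Integrable ε μ := .of_eval fun i => (hεL2 i).integrable one_le_two
  have hνint : Integrable ν μ := .of_eval fun i => (hνL2 i).integrable one_le_two
  have hx' : x = fun ω => c + ν ω := funext hx
  have hy' : y = fun ω => β • x ω + ε ω := funext hy
  have hxint : Integrable x μ := hx' ▸ (integrable_const c).add hνint
  have hyint : Integrable y μ := hy' ▸ (hxint.fun_smul β).add hεint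
  have hxmean : ∫ ω, x ω ∂μ = c := by
    rw [hx', integral_add (integrable_const c) hνint, integral_const,
      integral_eq_of_forall_integral_eval_eq (a := 0) hνint hνmean]
    simp
  have hymean : ∫ ω, y ω ∂μ = β • c + W *ᵥ α := by
    rw [hy', integral_add (hxint.fun_smul β) hεint, integral_smul, hxmean,
      integral_eq_of_forall_integral_eval_eq hεint hεmean]
    rfl
  have hGc : G *ᵥ c = ℓ := hℓ ▸ mulVec_add_mulVec_eq_of_mul_eq hGZ hGW π δ
  have hWℓ (a : Fin L → ℝ) : (W *ᵥ a) ⬝ᵥ ℓ = 0 := hℓ ▸ mulVec_dotProduct_mulVec_eq_zero hWZ a π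
  have hcℓ : c ⬝ᵥ ℓ = ℓ ⬝ᵥ ℓ := by rw [add_dotProduct, hWℓ, add_zero, hℓ]
  have hxGx : ∫ ω, x ω ⬝ᵥ (G *ᵥ x ω) ∂μ = ℓ ⬝ᵥ ℓ := by
    rw [integral_dotProduct_mulVec_of_iIndepFun hindep (f := fun i p => c i + p.2)
      (g := fun i p => c i + p.2) (by fun_prop) (by fun_prop) (by simp [hx]) (by simp [hx])
      hxint hxint hGdiag, hxmean, hGc, hcℓ]
  have hyGx : ∫ ω, y ω ⬝ᵥ (G *ᵥ x ω) ∂μ = β * (ℓ ⬝ᵥ ℓ) := by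
    rw [integral_dotProduct_mulVec_of_iIndepFun hindep (f := fun i p => β * (c i + p.2) + p.1)
      (g := fun i p => c i + p.2) (by fun_prop) (by fun_prop) (by simp [hy, hx, mul_add])
      (by simp [hx]) hyint hxint hGdiag, hymean, hxmean, hGc, add_dotProduct, smul_dotProduct,
      hWℓ, hcℓ, add_zero, smul_eq_mul]
  refine ⟨hxGx, hyGx, fun hℓ0 => ?_⟩
  rw [hxGx, hyGx, mul_div_cancel_right₀ _ (dotProduct_self_eq_zero.not.mpr hℓ0)]

/-- For any `G` with `G * W = 0`, `G * Z̃ = Z̃` and zero diagonal, without any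
homoskedasticity assumption, `E[xᵀGx] = ‖ℓ̃‖²` and `E[yᵀGx] = β·‖ℓ̃‖²`; in particular if
`ℓ̃ ≠ 0` then `E[yᵀGx]/E[xᵀGx] = β` exactly. -/
theorem stmt1
    {Ω : Type*} [MeasurableSpace Ω] (μ : Measure Ω) [IsProbabilityMeasure μ]
    (n K L : ℕ) (hn : 1 ≤ n) (hK : 1 ≤ K) (hL : 1 ≤ L)
    (W : Matrix (Fin n) (Fin L) ℝ) (Z : Matrix (Fin n) (Fin K) ℝ)
    (hWrank : W.rank = L) (hZrank : Z.rank = K) (hWZ : Wᵀ * Z = 0)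
    (ε ν : Ω → Fin n → ℝ)
    (hmeas : ∀ i, Measurable (fun ω => (ε ω i, ν ω i)))
    (hindep : ProbabilityTheory.iIndepFun
      (fun i ω => (ε ω i, ν ω i)) μ)
    (hεL2 : ∀ i, MemLp (fun ω => ε ω i) 2 μ)
    (hνL2 : ∀ i, MemLp (fun ω => ν ω i) 2 μ)
    (α : Fin L → ℝ) (π : Fin K → ℝ) (δ : Fin L → ℝ) (β : ℝ)
    (hνmean : ∀ i, ∫ ω, ν ω i ∂μ = 0)
    (hεmean : ∀ i, ∫ ω, ε ω i ∂μ = W i ⬝ᵥ α)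
    (x y : Ω → Fin n → ℝ) (ℓ : Fin n → ℝ)
    (hx : ∀ ω, x ω = Z *ᵥ π + W *ᵥ δ + ν ω)
    (hℓ : ℓ = Z *ᵥ π)
    (hy : ∀ ω, y ω = β • x ω + ε ω)
    (G : Matrix (Fin n) (Fin n) ℝ)
    (hGW : G * W = 0) (hGZ : G * Z = Z) (hGdiag : ∀ i, G i i = 0) :
    (∫ ω, x ω ⬝ᵥ (G *ᵥ x ω) ∂μ = ℓ ⬝ᵥ ℓ) ∧
    (∫ ω, y ω ⬝ᵥ (G *ᵥ x ω) ∂μ = β * (ℓ ⬝ᵥ ℓ)) ∧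
    (ℓ ≠ 0 →
      (∫ ω, y ω ⬝ᵥ (G *ᵥ x ω) ∂μ) / (∫ ω, x ω ⬝ᵥ (G *ᵥ x ω) ∂μ) = β) :=
  stmt1_general μ n K L W Z hWZ ε ν hindep hεL2 hνL2 α π δ β hνmean hεmean x y ℓ hx hℓ hy G hGW hGZ
    hGdiag
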